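/- Dobrushin coefficient of the noisy quantum circuit: let n be a nonempty finite type with d := Fintype.card n, let φ ∈ [0,1] and p ∈ [0,1], let U ∈ Matrix.unitaryGroup n ℂ, and let E : Fin m → Matrix n n ℂ be a POVM. For a unit vector w : EuclideanSpace ℂ n set ρ_w := Matrix.vecMulVec w (star w) and define the measurement-outcome probabilities q_w(i) := Re(Tr(E i * ((1 - p) • (U * ρ_w * Uᴴ) + (p/d) • (1 : Matrix n n ℂ)))). Then for all unit vectors u, v with ‖⟪u, v⟫‖² ≥ φ, we have ∑_{i : Fin m} max(0, q_u(i) - q_v(i)) ≤ (1 - p) * Real.sqrt(1 - φ). -/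

import Mathlib

/-!
The `p / d` term of the depolarizing channel is the same for both states, so the left side is
`(1 - p)` times the total-variation distance of the outcome distributions `a i = ⟨x, E i x⟩`,
`b i = ⟨y, E i y⟩` of `x = U u`, `y = U v`. Cauchy–Schwarz for the semi-inner product of each
`E i`, summed using `∑ i, E i = 1`, bounds the overlap `|⟨x, y⟩| = |⟨u, v⟩|` by the Bhattacharyya
coefficient `∑ i, √(a i b i)`. Classically the total-variation distance is at most
`√(1 - (∑ i, √(a i b i))²)`, by Cauchy–Schwarz applied to
`|a i - b i| = |√a i - √b i| (√a i + √b i)`.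
-/

open Matrix
open scoped ComplexOrder InnerProductSpace

/-- The density matrix of the pure state associated with a vector
`w : EuclideanSpace ℂ n`, i.e. the outer product `|w⟩⟨w|`. -/
noncomputable def pureState {n : Type*} [Fintype n]
    (w : EuclideanSpace ℂ n) : Matrix n n ℂ :=
  Matrix.vecMulVec (w : n → ℂ) (star (w : n → ℂ))

/-- Outcome probabilities of measuring the POVM element `E i` on the state
obtained from the pure state `|w⟩⟨w|` after the unitary `U` followed by the
depolarizing channel with parameter `p`. -/
noncomputable def outcomeProb {n : Type*} [Fintype n] [DecidableEq n] {m : ℕ}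
    (E : Fin m → Matrix n n ℂ) (U : Matrix.unitaryGroup n ℂ) (p : ℝ)
    (w : EuclideanSpace ℂ n) (i : Fin m) : ℝ :=
  (E i * ((1 - p) • ((U : Matrix n n ℂ) * pureState w * (U : Matrix n n ℂ)ᴴ)
      + (p / (Fintype.card n : ℝ)) • (1 : Matrix n n ℂ))).trace.re

open Finset in
theorem sq_sum_abs_sq_sub_sq_le {ι : Type*} [Fintype ι] {r s : ι → ℝ}
    (hr : ∑ i, r i ^ 2 = 1) (hs : ∑ i, s i ^ 2 = 1) :
    (∑ i, |r i ^ 2 - s i ^ 2|) ^ 2 ≤ 4 * (1 - (∑ i, r i * s i) ^ 2) := by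
  have hfactor : ∀ i, |r i ^ 2 - s i ^ 2| = |r i - s i| * |r i + s i| := fun i => by
    rw [← abs_mul]; ring_nf
  have hminus : ∑ i, |r i - s i| ^ 2 = 2 - 2 * ∑ i, r i * s i := by
    simp only [sq_abs, sub_sq, sum_add_distrib, sum_sub_distrib, hr, hs, mul_assoc, ← mul_sum]
    ring
  have hplus : ∑ i, |r i + s i| ^ 2 = 2 + 2 * ∑ i, r i * s i := by
    simp only [sq_abs, add_sq, sum_add_distrib, hr, hs, mul_assoc, ← mul_sum]
    ring
  calc (∑ i, |r i ^ 2 - s i ^ 2|) ^ 2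
      = (∑ i, |r i - s i| * |r i + s i|) ^ 2 := by simp only [hfactor]
    _ ≤ (∑ i, |r i - s i| ^ 2) * ∑ i, |r i + s i| ^ 2 := sum_mul_sq_le_sq_mul_sq _ _ _
    _ = 4 * (1 - (∑ i, r i * s i) ^ 2) := by rw [hminus, hplus]; ring

theorem max_zero_eq_half_abs_add (x : ℝ) : max 0 x = (|x| + x) / 2 := by
  rcases le_total 0 x with h | h
  · rw [max_eq_right h, abs_of_nonneg h]; ring
  · rw [max_eq_left h, abs_of_nonpos h]; ring

theorem sum_max_zero_sub_le_sqrt_one_sub_sq {ι : Type*} [Fintype ι] {a b : ι → ℝ}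
    (ha : ∀ i, 0 ≤ a i) (hb : ∀ i, 0 ≤ b i) (hsa : ∑ i, a i = 1) (hsb : ∑ i, b i = 1) :
    ∑ i, max 0 (a i - b i) ≤ √(1 - (∑ i, √(a i) * √(b i)) ^ 2) := by
  have hhalf : ∑ i, max 0 (a i - b i) = (∑ i, |a i - b i|) / 2 := by
    simp only [max_zero_eq_half_abs_add, ← Finset.sum_div, Finset.sum_add_distrib,
      Finset.sum_sub_distrib, hsa, hsb, sub_self, add_zero]
  have hsq := sq_sum_abs_sq_sub_sq_le (r := fun i => √(a i)) (s := fun i => √(b i))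
    (by simpa only [Real.sq_sqrt (ha _)] using hsa)
    (by simpa only [Real.sq_sqrt (hb _)] using hsb)
  simp only [Real.sq_sqrt (ha _), Real.sq_sqrt (hb _)] at hsq
  rw [hhalf]
  exact Real.le_sqrt_of_sq_le (by linarith)

theorem Matrix.PosSemidef.norm_dotProduct_mulVec_le {𝕜 n : Type*} [RCLike 𝕜] [Fintype n]
    {A : Matrix n n 𝕜} (hA : A.PosSemidef) (x y : n → 𝕜) :
    ‖star x ⬝ᵥ (A *ᵥ y)‖
      ≤ √(RCLike.re (star x ⬝ᵥ (A *ᵥ x))) * √(RCLike.re (star y ⬝ᵥ (A *ᵥ y))) := by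
  let := A.toSeminormedAddCommGroup hA
  let := A.toInnerProductSpace hA
  have h : ‖(A *ᵥ y) ⬝ᵥ star x‖
      ≤ √(RCLike.re ((A *ᵥ x) ⬝ᵥ star x)) * √(RCLike.re ((A *ᵥ y) ⬝ᵥ star y)) :=
    norm_inner_le_norm (𝕜 := 𝕜) x y
  simpa only [dotProduct_comm (A *ᵥ _)] using h

section POVM

variable {𝕜 ι n : Type*} [RCLike 𝕜] [Fintype ι] [Fintype n] [DecidableEq n]
  {E : ι → Matrix n n 𝕜}

theorem sum_dotProduct_mulVec_of_sum_eq_one (hE : ∑ i, E i = 1) (x y : n → 𝕜) :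
    ∑ i, x ⬝ᵥ (E i *ᵥ y) = x ⬝ᵥ y := by
  rw [← dotProduct_sum, ← sum_mulVec, hE, one_mulVec]

theorem norm_dotProduct_le_sum_sqrt_mul_sqrt (hE : ∀ i, (E i).PosSemidef) (hsum : ∑ i, E i = 1)
    (x y : n → 𝕜) :
    ‖star x ⬝ᵥ y‖
      ≤ ∑ i, √(RCLike.re (star x ⬝ᵥ (E i *ᵥ x))) * √(RCLike.re (star y ⬝ᵥ (E i *ᵥ y))) :=
  calc ‖star x ⬝ᵥ y‖ = ‖∑ i, star x ⬝ᵥ (E i *ᵥ y)‖ := by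
        rw [sum_dotProduct_mulVec_of_sum_eq_one hsum]
    _ ≤ ∑ i, ‖star x ⬝ᵥ (E i *ᵥ y)‖ := norm_sum_le _ _
    _ ≤ _ := Finset.sum_le_sum fun i _ => (hE i).norm_dotProduct_mulVec_le x y

theorem sum_re_dotProduct_mulVec_of_sum_eq_one (hsum : ∑ i, E i = 1) {x : n → 𝕜}
    (hx : star x ⬝ᵥ x = 1) : ∑ i, RCLike.re (star x ⬝ᵥ (E i *ᵥ x)) = 1 := by
  rw [← map_sum, sum_dotProduct_mulVec_of_sum_eq_one hsum, hx, RCLike.one_re]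

theorem sum_max_zero_sub_re_dotProduct_mulVec_le (hE : ∀ i, (E i).PosSemidef)
    (hsum : ∑ i, E i = 1) {x y : n → 𝕜} (hx : star x ⬝ᵥ x = 1) (hy : star y ⬝ᵥ y = 1) :
    ∑ i, max 0 (RCLike.re (star x ⬝ᵥ (E i *ᵥ x)) - RCLike.re (star y ⬝ᵥ (E i *ᵥ y)))
      ≤ √(1 - ‖star x ⬝ᵥ y‖ ^ 2) := by
  refine (sum_max_zero_sub_le_sqrt_one_sub_sq (fun i => (hE i).re_dotProduct_nonneg x)
    (fun i => (hE i).re_dotProduct_nonneg y) (sum_re_dotProduct_mulVec_of_sum_eq_one hsum hx)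
    (sum_re_dotProduct_mulVec_of_sum_eq_one hsum hy)).trans (Real.sqrt_le_sqrt ?_)
  gcongr
  exact norm_dotProduct_le_sum_sqrt_mul_sqrt hE hsum x y

end POVM

theorem Matrix.UnitaryGroup.star_mulVec_dotProduct_mulVec {𝕜 n : Type*} [RCLike 𝕜] [Fintype n]
    [DecidableEq n] (U : unitaryGroup n 𝕜) (x y : n → 𝕜) :
    star ((U : Matrix n n 𝕜) *ᵥ x) ⬝ᵥ ((U : Matrix n n 𝕜) *ᵥ y) = star x ⬝ᵥ y := by
  rw [star_mulVec, dotProduct_mulVec, vecMul_vecMul, ← star_eq_conjTranspose,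
    UnitaryGroup.star_mul_self, vecMul_one]

theorem EuclideanSpace.star_dotProduct_eq_inner {𝕜 n : Type*} [RCLike 𝕜] [Fintype n]
    (u v : EuclideanSpace 𝕜 n) : star (u : n → 𝕜) ⬝ᵥ (v : n → 𝕜) = ⟪u, v⟫_𝕜 :=
  dotProduct_comm _ _

theorem trace_mul_conj_pureState {n : Type*} [Fintype n] (A M : Matrix n n ℂ)
    (w : EuclideanSpace ℂ n) :
    (A * (M * pureState w * Mᴴ)).trace
      = star (M *ᵥ (w : n → ℂ)) ⬝ᵥ (A *ᵥ (M *ᵥ (w : n → ℂ))) := by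
  rw [pureState, mul_vecMulVec, vecMulVec_mul, ← star_mulVec, mul_vecMulVec, trace_vecMulVec,
    dotProduct_comm]

theorem outcomeProb_sub_outcomeProb {n : Type*} [Fintype n] [DecidableEq n] {m : ℕ}
    (E : Fin m → Matrix n n ℂ) (U : Matrix.unitaryGroup n ℂ) (p : ℝ)
    (u v : EuclideanSpace ℂ n) (i : Fin m) :
    outcomeProb E U p u i - outcomeProb E U p v i
      = (1 - p) * ((star ((U : Matrix n n ℂ) *ᵥ (u : n → ℂ))
            ⬝ᵥ (E i *ᵥ ((U : Matrix n n ℂ) *ᵥ (u : n → ℂ)))).re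
          - (star ((U : Matrix n n ℂ) *ᵥ (v : n → ℂ))
            ⬝ᵥ (E i *ᵥ ((U : Matrix n n ℂ) *ᵥ (v : n → ℂ)))).re) := by
  simp only [outcomeProb, mul_add, Matrix.mul_smul, trace_add, trace_smul,
    trace_mul_conj_pureState, Complex.add_re, Complex.smul_re, smul_eq_mul]
  ring

theorem noisy_circuit_dobrushin
    {n : Type*} [Fintype n] [DecidableEq n] {m : ℕ}
    (φ p : ℝ) (hp1 : p ≤ 1)
    (U : Matrix.unitaryGroup n ℂ)
    (E : Fin m → Matrix n n ℂ) (hE : ∀ i, (E i).PosSemidef)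
    (hEsum : ∑ i, E i = 1) :
    ∀ u v : EuclideanSpace ℂ n, ‖u‖ = 1 → ‖v‖ = 1 →
      φ ≤ ‖⟪u, v⟫_ℂ‖ ^ 2 →
      ∑ i, max 0 (outcomeProb E U p u i - outcomeProb E U p v i)
        ≤ (1 - p) * Real.sqrt (1 - φ) := by
  intro u v hu hv hφuv
  have hp : 0 ≤ 1 - p := sub_nonneg.2 hp1
  have hunit : ∀ w : EuclideanSpace ℂ n, ‖w‖ = 1 →
      star ((U : Matrix n n ℂ) *ᵥ (w : n → ℂ)) ⬝ᵥ ((U : Matrix n n ℂ) *ᵥ (w : n → ℂ)) = 1 :=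
    fun w hw => by
      rw [UnitaryGroup.star_mulVec_dotProduct_mulVec, EuclideanSpace.star_dotProduct_eq_inner,
        inner_self_eq_norm_sq_to_K, hw]
      norm_num
  have hscale : ∀ x : ℝ, max 0 ((1 - p) * x) = (1 - p) * max 0 x := fun x => by
    rw [mul_max_of_nonneg _ _ hp, mul_zero]
  simp only [outcomeProb_sub_outcomeProb, hscale, ← Finset.mul_sum]
  refine (mul_le_mul_of_nonneg_left
    (sum_max_zero_sub_re_dotProduct_mulVec_le hE hEsum (hunit u hu) (hunit v hv)) hp).trans ?_
  rw [UnitaryGroup.star_mulVec_dotProduct_mulVec, EuclideanSpace.star_dotProduct_eq_inner]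
  gcongr
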